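/- Let g(m, 2d) = Σ_{i=0}^{m-1} ⌈d/2^{i-1}⌉ (with ⌈d/2^{-1}⌉ = 2d). For any integers k ≥ 1 and d ≥ 1: g(2k, 2(d + 3·2^{2k-2})) = g(2k, 2d) + 3·(2^{2k} − 1). Consequently, if 3(n+1) < g(2k, 2(n − t) + 2) (so that an additive [n+1, k, n−t+1]_4 code is excluded by the additive Griesmer bound), then 3(n + 2^{2k} − 1 + 1) < g(2k, 2(n + 2^{2k} − 1 − t) + 2) as well. -/
import Mathlib


/-- The additive Griesmer sum: `G m d` represents g(m, 2d) = Σ_{i=0}^{m-1} ⌈d/2^{i-1}⌉,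
with the `i = 0` term equal to `2d`. -/
def G (m d : ℕ) : ℕ := 2 * d + ∑ i ∈ Finset.Ico 1 m, (d + 2 ^ (i - 1) - 1) / 2 ^ (i - 1)

lemma sum_pow_range (n : ℕ) : ∑ j ∈ Finset.range n, 2 ^ j = 2 ^ n - 1 := by
  induction n with
  | zero => simp
  | succ n ih =>
    have h1 : 1 ≤ 2 ^ n := Nat.one_le_two_pow
    rw [Finset.sum_range_succ, ih, pow_succ]
    omega

lemma G_mono (m : ℕ) {d d' : ℕ} (h : d ≤ d') : G m d ≤ G m d' := by
  unfold G
  refine Nat.add_le_add (by omega) (Finset.sum_le_sum fun i _ => ?_)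
  exact Nat.div_le_div_right (by omega)

lemma G_add (k d : ℕ) (hk : 1 ≤ k) :
    G (2 * k) (d + 3 * 2 ^ (2 * k - 2)) = G (2 * k) d + 3 * (2 ^ (2 * k) - 1) := by
  set m := 2 * k with hmdef
  have hm : 2 ≤ m := by omega
  unfold G
  have step : ∀ i ∈ Finset.Ico 1 m,
      (d + 3 * 2 ^ (m - 2) + 2 ^ (i - 1) - 1) / 2 ^ (i - 1)
        = (d + 2 ^ (i - 1) - 1) / 2 ^ (i - 1) + 3 * 2 ^ (m - 1 - i) := by
    intro i hi
    rw [Finset.mem_Ico] at hi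
    obtain ⟨h1, h2⟩ := hi
    have hp : 1 ≤ 2 ^ (i - 1) := Nat.one_le_two_pow
    have hdvd : 2 ^ (i - 1) ∣ 3 * 2 ^ (m - 2) :=
      Dvd.dvd.mul_left (pow_dvd_pow 2 (by omega)) 3
    have hre : d + 3 * 2 ^ (m - 2) + 2 ^ (i - 1) - 1
        = 3 * 2 ^ (m - 2) + (d + 2 ^ (i - 1) - 1) := by omega
    rw [hre, Nat.add_div_of_dvd_right hdvd]
    have hfac : 3 * 2 ^ (m - 2) = 3 * 2 ^ (m - 1 - i) * 2 ^ (i - 1) := by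
      rw [mul_assoc, ← pow_add]
      congr 2
      omega
    rw [hfac, Nat.mul_div_cancel _ (by omega : 0 < 2 ^ (i - 1))]
    omega
  rw [Finset.sum_congr rfl step, Finset.sum_add_distrib]
  have hsum : ∑ i ∈ Finset.Ico 1 m, 3 * 2 ^ (m - 1 - i) = 3 * (2 ^ (m - 1) - 1) := by
    rw [← Finset.mul_sum]
    congr 1
    rw [Finset.sum_Ico_eq_sum_range]
    have : ∀ j ∈ Finset.range (m - 1), 2 ^ (m - 1 - (1 + j)) = 2 ^ (m - 1 - 1 - j) := by
      intro j _
      congr 1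
      omega
    rw [Finset.sum_congr rfl this, Finset.sum_range_reflect (fun j => 2 ^ j) (m - 1),
      sum_pow_range]
  rw [hsum]
  have h4 : 2 ^ m = 4 * 2 ^ (m - 2) := by
    have e := pow_add 2 (m - 2) 2
    rw [Nat.sub_add_cancel hm] at e
    omega
  have h2 : 2 ^ (m - 1) = 2 * 2 ^ (m - 2) := by
    have e := pow_succ 2 (m - 2)
    have e2 : m - 2 + 1 = m - 1 := by omega
    rw [e2] at e
    omega
  have hp : 1 ≤ 2 ^ (m - 2) := Nat.one_le_two_pow
  omega

theorem stmt10 (k d : ℕ) (hk : 1 ≤ k) (hd : 1 ≤ d) :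
    G (2 * k) (d + 3 * 2 ^ (2 * k - 2)) = G (2 * k) d + 3 * (2 ^ (2 * k) - 1) ∧
    (∀ n t : ℕ, t ≤ n → 3 * (n + 1) < G (2 * k) (n - t + 1) →
      3 * (n + 2 ^ (2 * k) - 1 + 1) < G (2 * k) (n + 2 ^ (2 * k) - 1 - t + 1)) := by
  refine ⟨G_add k d hk, fun n t ht h => ?_⟩
  have hE : 4 ≤ 2 ^ (2 * k) := by
    calc (4 : ℕ) = 2 ^ 2 := by norm_num
    _ ≤ 2 ^ (2 * k) := Nat.pow_le_pow_right (by norm_num) (by omega)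
  have h4 : 2 ^ (2 * k) = 4 * 2 ^ (2 * k - 2) := by
    have e := pow_add 2 (2 * k - 2) 2
    rw [Nat.sub_add_cancel (by omega : 2 ≤ 2 * k)] at e
    omega
  have hle : (n - t + 1) + 3 * 2 ^ (2 * k - 2) ≤ n + 2 ^ (2 * k) - 1 - t + 1 := by
    have hp : 1 ≤ 2 ^ (2 * k - 2) := Nat.one_le_two_pow
    omega
  have key := G_add k (n - t + 1) hk
  have hmono := G_mono (2 * k) hle
  omega
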